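/- Let n ≥ 2 and m ≥ 1 be integers. Let ρ(e) ∈ ℕ^{V(𝒢_n)} denote the 0/1 indicator vector of the endpoints of an edge e of 𝒢_n. Then the number of vectors b ∈ ℕ^{V(𝒢_n)} that can be written as the sum of some multiset of m edge vectors ρ(e) (equivalently, the dimension over k of the degree-m component of the edge ring k[𝒢_n], i.e., the number of distinct degree-2m monomials of the form ∏_{i=1}^{m} t^{e_i} with each e_i an edge of 𝒢_n) equals Σ_{i=0}^{n} C(n, i)·C(2n + m − i, 2n) − C(2n + m − 1, 2n). -/

import Mathlib

/-- Edges of the graph `𝒢ₙ`: `(i,0) = xᵢ`, `(i,1) = yᵢ`, `(i,2) = zᵢ`. -/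
abbrev EdgeVar (n : ℕ) := Fin n × Fin 3

/-- Vertices of the graph `𝒢ₙ`: `none = w`, `some (i,0) = uᵢ⁽¹⁾`, `some (i,1) = uᵢ⁽²⁾`. -/
abbrev VertexVar (n : ℕ) := Option (Fin n × Fin 2)

/-- First endpoint of an edge: `xᵢ` and `yᵢ` contain `w`, `zᵢ` contains `uᵢ⁽¹⁾`. -/
def ep1 {n : ℕ} (e : EdgeVar n) : VertexVar n :=
  if e.2 = 2 then some (e.1, 0) else none

/-- Second endpoint of an edge: `xᵢ` contains `uᵢ⁽¹⁾`, while `yᵢ` and `zᵢ` contain `uᵢ⁽²⁾`. -/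
def ep2 {n : ℕ} (e : EdgeVar n) : VertexVar n :=
  if e.2 = 0 then some (e.1, 0) else some (e.1, 1)

/-- `ρ(e) = 𝐞_a + 𝐞_b ∈ ℕ^{V(𝒢ₙ)}` for an edge `e = {a, b}` of `𝒢ₙ`. -/
def rho {n : ℕ} (e : EdgeVar n) : VertexVar n → ℕ :=
  fun v => (if v = ep1 e then 1 else 0) + (if v = ep2 e then 1 else 0)

open Finset

instance finite_sum_le (ι : Type*) [Fintype ι] (k : ℕ) :
    Finite {g : ι → ℕ // ∑ i, g i ≤ k} := by
  apply Finite.of_injective (fun g (i : ι) =>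
    (⟨g.1 i, Nat.lt_succ_of_le ((Finset.single_le_sum (fun i _ => Nat.zero_le _)
      (Finset.mem_univ i)).trans g.2)⟩ : Fin (k+1)))
  intro g h hgh
  apply Subtype.ext
  funext i
  simpa [Fin.ext_iff] using congrFun hgh i

lemma nat_card_sigma {ι : Type*} [Fintype ι] (F : ι → Type*) [∀ i, Finite (F i)] :
    Nat.card (Σ i, F i) = ∑ i, Nat.card (F i) := by
  letI : ∀ i, Fintype (F i) := fun i => Fintype.ofFinite _
  simp [Nat.card_eq_fintype_card, Fintype.card_sigma]

lemma card_sum_le_fin (d : ℕ) : ∀ k, Nat.card {g : Fin d → ℕ // ∑ i, g i ≤ k} = (d + k).choose d := by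
  induction d with
  | zero =>
    intro k
    have h : ∀ g : Fin 0 → ℕ, ∑ i, g i ≤ k := by simp
    rw [Nat.choose_zero_right, Nat.card_congr (Equiv.subtypeUnivEquiv h)]
    exact Nat.card_unique
  | succ d ih =>
    intro k
    have e : {g : Fin (d+1) → ℕ // ∑ i, g i ≤ k} ≃
        Σ j : Fin (k+1), {g : Fin d → ℕ // ∑ i, g i ≤ k - j} :=
      { toFun := fun g => ⟨⟨g.1 0, by
          have := g.2; rw [Fin.sum_univ_succ] at this; omega⟩,
          ⟨Fin.tail g.1, by
            have := g.2; rw [Fin.sum_univ_succ] at this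
            have ht : ∑ i, Fin.tail g.1 i = ∑ i : Fin d, g.1 i.succ := rfl
            simp only [Fin.val_mk]
            omega⟩⟩
        invFun := fun x => ⟨Fin.cons x.1 x.2.1, by
          rw [Fin.sum_univ_succ]
          simp only [Fin.cons_zero, Fin.cons_succ]
          have := x.2.2
          have := x.1.isLt
          omega⟩
        left_inv := fun g => Subtype.ext (Fin.cons_self_tail g.1)
        right_inv := fun x => rfl }
    rw [Nat.card_congr e, nat_card_sigma]
    have : ∀ j : Fin (k+1), Nat.card {g : Fin d → ℕ // ∑ i, g i ≤ k - j.1} = (d + (k - j.1)).choose d :=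
      fun j => ih (k - j.1)
    rw [Fintype.sum_congr _ _ this]
    rw [Fin.sum_univ_eq_sum_range (fun j => (d + (k - j)).choose d) (k+1)]
    rw [← Finset.sum_range_reflect]
    have h2 : ∀ j ∈ Finset.range (k+1), (d + (k - (k + 1 - 1 - j))).choose d = (d + j).choose d := by
      intro j hj; rw [Finset.mem_range] at hj; congr 2; omega
    rw [Finset.sum_congr rfl h2]
    have h3 := Nat.sum_range_add_choose k d
    have h5 : ∀ j ∈ Finset.range (k+1), (d + j).choose d = (j + d).choose d := by
      intro j _; congr 1; omega
    rw [Finset.sum_congr rfl h5, h3]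
    congr 1; omega

lemma card_sum_le (ι : Type*) [Fintype ι] (k : ℕ) :
    Nat.card {g : ι → ℕ // ∑ i, g i ≤ k} =
      (Fintype.card ι + k).choose (Fintype.card ι) := by
  have e := Fintype.equivFin ι
  have e2 : {g : ι → ℕ // ∑ i, g i ≤ k} ≃
      {g : Fin (Fintype.card ι) → ℕ // ∑ i, g i ≤ k} := by
    refine Equiv.subtypeEquiv (Equiv.arrowCongr e (Equiv.refl ℕ)) fun g => ?_
    have : ∑ j, (Equiv.arrowCongr e (Equiv.refl ℕ) g) j = ∑ i, g i := by
      simp only [Equiv.arrowCongr_apply, Function.comp, Equiv.refl_apply]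
      exact e.symm.sum_comp _
    rw [this]
  rw [Nat.card_congr e2, card_sum_le_fin]

def pairEquiv (n : ℕ) : (Fin n → ℕ × ℕ) ≃ (Fin n × Fin 2 → ℕ) where
  toFun f := fun p => if p.2 = 0 then (f p.1).1 else (f p.1).2
  invFun g := fun i => (g (i, 0), g (i, 1))
  left_inv f := by funext i; simp
  right_inv g := by
    funext p
    obtain ⟨i, j⟩ := p
    fin_cases j <;> simp

lemma sum_pairEquiv (n : ℕ) (f : Fin n → ℕ × ℕ) :
    ∑ p, pairEquiv n f p = ∑ i, ((f i).1 + (f i).2) := by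
  rw [Fintype.sum_prod_type]
  refine Finset.sum_congr rfl fun i _ => ?_
  rw [Fin.sum_univ_two]
  simp [pairEquiv]

lemma card_pairs_sum_le (n k : ℕ) :
    Nat.card {f : Fin n → ℕ × ℕ // ∑ i, ((f i).1 + (f i).2) ≤ k} = (2*n + k).choose (2*n) := by
  have e2 : {f : Fin n → ℕ × ℕ // ∑ i, ((f i).1 + (f i).2) ≤ k} ≃
      {g : Fin n × Fin 2 → ℕ // ∑ p, g p ≤ k} := by
    refine Equiv.subtypeEquiv (pairEquiv n) fun f => ?_
    rw [sum_pairEquiv]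
  rw [Nat.card_congr e2, card_sum_le]
  have : Fintype.card (Fin n × Fin 2) = 2 * n := by simp [mul_comm]
  rw [this]

instance finite_pairs (n k : ℕ) : Finite {f : Fin n → ℕ × ℕ // ∑ i, ((f i).1 + (f i).2) ≤ k} := by
  apply Finite.of_injective (fun f => (⟨pairEquiv n f.1, by rw [sum_pairEquiv]; exact f.2⟩ :
    {g : Fin n × Fin 2 → ℕ // ∑ p, g p ≤ k}))
  intro a b hab
  apply Subtype.ext
  exact (pairEquiv n).injective (by simpa using congrArg Subtype.val hab)

lemma finite_of_imp {α : Type*} {P Q : α → Prop} (_ : Finite {a // Q a}) (h : ∀ a, P a → Q a) :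
    Finite {a // P a} :=
  Finite.of_injective (fun x => (⟨x.1, h _ x.2⟩ : {a // Q a}))
    (fun a b hab => Subtype.ext (by simpa using congrArg Subtype.val hab))

lemma max_split (x y : ℕ) :
    max x y = (if y < x then 1 else 0) +
      (((if y < x then ((x - y - 1 : ℕ), y) else (x, y - x)) : ℕ × ℕ).1 +
       ((if y < x then ((x - y - 1 : ℕ), y) else (x, y - x)) : ℕ × ℕ).2) := by
  by_cases h : y < x <;> simp [h] <;> omega

def splitEquiv (n m : ℕ) :
    {f : Fin n → ℕ × ℕ // ∑ i, max (f i).1 (f i).2 ≤ m} ≃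
    {p : Finset (Fin n) × (Fin n → ℕ × ℕ) //
      p.1.card + ∑ i, ((p.2 i).1 + (p.2 i).2) ≤ m} where
  toFun f := ⟨(univ.filter (fun i => (f.1 i).2 < (f.1 i).1),
      fun i => if (f.1 i).2 < (f.1 i).1
        then ((f.1 i).1 - (f.1 i).2 - 1, (f.1 i).2)
        else ((f.1 i).1, (f.1 i).2 - (f.1 i).1)), by
    have hc : (univ.filter (fun i => (f.1 i).2 < (f.1 i).1)).card
        = ∑ i, (if (f.1 i).2 < (f.1 i).1 then 1 else 0) := by
      rw [Finset.card_filter]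
    rw [hc, ← Finset.sum_add_distrib]
    calc ∑ i, ((if (f.1 i).2 < (f.1 i).1 then 1 else 0) +
          ((if (f.1 i).2 < (f.1 i).1
            then ((f.1 i).1 - (f.1 i).2 - 1, (f.1 i).2)
            else ((f.1 i).1, (f.1 i).2 - (f.1 i).1)).1 +
           (if (f.1 i).2 < (f.1 i).1
            then ((f.1 i).1 - (f.1 i).2 - 1, (f.1 i).2)
            else ((f.1 i).1, (f.1 i).2 - (f.1 i).1)).2))
        = ∑ i, max (f.1 i).1 (f.1 i).2 :=
          Finset.sum_congr rfl fun i _ => (max_split _ _).symm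
      _ ≤ m := f.2⟩
  invFun p := ⟨fun i => if i ∈ p.1.1
      then ((p.1.2 i).1 + (p.1.2 i).2 + 1, (p.1.2 i).2)
      else ((p.1.2 i).1, (p.1.2 i).1 + (p.1.2 i).2), by
    have key : ∀ i, max ((if i ∈ p.1.1
        then ((p.1.2 i).1 + (p.1.2 i).2 + 1, (p.1.2 i).2)
        else ((p.1.2 i).1, (p.1.2 i).1 + (p.1.2 i).2)) : ℕ × ℕ).1
        ((if i ∈ p.1.1
        then ((p.1.2 i).1 + (p.1.2 i).2 + 1, (p.1.2 i).2)
        else ((p.1.2 i).1, (p.1.2 i).1 + (p.1.2 i).2)) : ℕ × ℕ).2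
        = (if i ∈ p.1.1 then 1 else 0) + ((p.1.2 i).1 + (p.1.2 i).2) := by
      intro i; by_cases h : i ∈ p.1.1 <;> simp [h] <;> omega
    rw [Finset.sum_congr rfl fun i _ => key i, Finset.sum_add_distrib]
    have : ∑ i, (if i ∈ p.1.1 then 1 else 0) = p.1.1.card := by
      rw [Finset.sum_ite_mem, Finset.univ_inter, Finset.sum_const, smul_eq_mul, mul_one]
    rw [this]
    exact p.2⟩
  left_inv f := by
    apply Subtype.ext
    funext i
    by_cases h : (f.1 i).2 < (f.1 i).1 <;>
      simp only [Finset.mem_filter, Finset.mem_univ, true_and, h, if_true, if_false] <;>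
      refine Prod.ext ?_ ?_ <;> simp <;> omega
  right_inv p := by
    apply Subtype.ext
    refine Prod.ext ?_ ?_
    · ext i
      simp only [Finset.mem_filter, Finset.mem_univ, true_and]
      by_cases h : i ∈ p.1.1 <;> simp [h] <;> omega
    · funext i
      by_cases h : i ∈ p.1.1 <;> simp only [h, if_true, if_false] <;> split <;>
        refine Prod.ext ?_ ?_ <;> simp [h] <;> omega

lemma card_A (n m : ℕ) (hn : 1 ≤ n) :
    Nat.card {f : Fin n → ℕ × ℕ // ∑ i, max (f i).1 (f i).2 ≤ m} =
      ∑ i ∈ Finset.range (n + 1), n.choose i * (2 * n + m - i).choose (2 * n) := by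
  rw [Nat.card_congr ((splitEquiv n m).trans
    (Equiv.subtypeProdEquivSigmaSubtype fun (s : Finset (Fin n)) (g : Fin n → ℕ × ℕ) =>
      s.card + ∑ i, ((g i).1 + (g i).2) ≤ m))]
  haveI : ∀ s : Finset (Fin n),
      Finite {g : Fin n → ℕ × ℕ // s.card + ∑ i, ((g i).1 + (g i).2) ≤ m} := fun s =>
    finite_of_imp (finite_pairs n m) (fun g h => by omega)
  rw [nat_card_sigma]
  have hfib : ∀ s : Finset (Fin n),
      Nat.card {g : Fin n → ℕ × ℕ // s.card + ∑ i, ((g i).1 + (g i).2) ≤ m}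
        = (2 * n + m - s.card).choose (2 * n) := by
    intro s
    by_cases h : s.card ≤ m
    · have e : {g : Fin n → ℕ × ℕ // s.card + ∑ i, ((g i).1 + (g i).2) ≤ m} ≃
          {g : Fin n → ℕ × ℕ // ∑ i, ((g i).1 + (g i).2) ≤ m - s.card} :=
        Equiv.subtypeEquiv (Equiv.refl _) (fun g => by simp; omega)
      rw [Nat.card_congr e, card_pairs_sum_le]
      congr 1; omega
    · have : IsEmpty {g : Fin n → ℕ × ℕ // s.card + ∑ i, ((g i).1 + (g i).2) ≤ m} := by
        constructor; rintro ⟨g, hg⟩; omega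
      rw [Nat.card_of_isEmpty]
      have hcard : s.card ≤ n := by
        simpa using Finset.card_le_card (Finset.subset_univ s)
      symm
      apply Nat.choose_eq_zero_of_lt
      omega
  rw [Fintype.sum_congr _ _ hfib]
  have : ∑ s : Finset (Fin n), (2 * n + m - s.card).choose (2 * n)
      = ∑ s ∈ (univ : Finset (Fin n)).powerset, (2 * n + m - s.card).choose (2 * n) := by
    rw [Finset.powerset_univ]
  rw [this, Finset.sum_powerset_apply_card (fun j => (2 * n + m - j).choose (2 * n))]
  simp [smul_eq_mul]

lemma rho_u1 {n : ℕ} (a : EdgeVar n) (i : Fin n) :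
    rho a (some (i, 0)) = (if ((i, 2) : EdgeVar n) = a then 1 else 0)
      + (if ((i, 0) : EdgeVar n) = a then 1 else 0) := by
  obtain ⟨i', j'⟩ := a
  fin_cases j' <;> simp [rho, ep1, ep2, Prod.ext_iff, eq_comm]

lemma rho_u2 {n : ℕ} (a : EdgeVar n) (i : Fin n) :
    rho a (some (i, 1)) = (if ((i, 1) : EdgeVar n) = a then 1 else 0)
      + (if ((i, 2) : EdgeVar n) = a then 1 else 0) := by
  obtain ⟨i', j'⟩ := a
  fin_cases j' <;> simp [rho, ep1, ep2, Prod.ext_iff, eq_comm]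

lemma rho_w {n : ℕ} (a : EdgeVar n) :
    rho a none = ∑ i : Fin n, ((if ((i, 0) : EdgeVar n) = a then 1 else 0)
      + (if ((i, 1) : EdgeVar n) = a then 1 else 0)) := by
  obtain ⟨i', j'⟩ := a
  fin_cases j' <;>
    simp [rho, ep1, ep2, Prod.ext_iff, Finset.sum_add_distrib, Finset.sum_ite_eq']

lemma eval1 {n : ℕ} (M : Multiset (EdgeVar n)) (i : Fin n) :
    (M.map rho).sum (some (i, 0)) = M.count (i, 0) + M.count (i, 2) := by
  induction M using Multiset.induction with
  | empty => simp
  | cons a M ih =>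
    simp only [Multiset.map_cons, Multiset.sum_cons, Pi.add_apply, ih,
      Multiset.count_cons, rho_u1]
    omega

lemma eval2 {n : ℕ} (M : Multiset (EdgeVar n)) (i : Fin n) :
    (M.map rho).sum (some (i, 1)) = M.count (i, 1) + M.count (i, 2) := by
  induction M using Multiset.induction with
  | empty => simp
  | cons a M ih =>
    simp only [Multiset.map_cons, Multiset.sum_cons, Pi.add_apply, ih,
      Multiset.count_cons, rho_u2]
    omega

lemma eval0 {n : ℕ} (M : Multiset (EdgeVar n)) :
    (M.map rho).sum none = ∑ i : Fin n, (M.count (i, 0) + M.count (i, 1)) := by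
  induction M using Multiset.induction with
  | empty => simp
  | cons a M ih =>
    simp only [Multiset.map_cons, Multiset.sum_cons, Pi.add_apply, ih,
      Multiset.count_cons, rho_w]
    rw [← Finset.sum_add_distrib]
    refine Finset.sum_congr rfl fun i _ => ?_
    omega

lemma evalcard {n : ℕ} (M : Multiset (EdgeVar n)) :
    Multiset.card M = ∑ i : Fin n, (M.count (i, 0) + M.count (i, 1) + M.count (i, 2)) := by
  induction M using Multiset.induction with
  | empty => simp
  | cons a M ih =>
    simp only [Multiset.card_cons, ih, Multiset.count_cons]
    obtain ⟨i', j'⟩ := a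
    have step : ∀ x : Fin n,
        ((Multiset.count (x, 0) M + if ((x, 0) : EdgeVar n) = (i', j') then 1 else 0) +
          (Multiset.count (x, 1) M + if ((x, 1) : EdgeVar n) = (i', j') then 1 else 0) +
          (Multiset.count (x, 2) M + if ((x, 2) : EdgeVar n) = (i', j') then 1 else 0))
        = (Multiset.count (x, 0) M + Multiset.count (x, 1) M + Multiset.count (x, 2) M) +
          ((if ((x, 0) : EdgeVar n) = (i', j') then 1 else 0) +
           (if ((x, 1) : EdgeVar n) = (i', j') then 1 else 0) +
           (if ((x, 2) : EdgeVar n) = (i', j') then 1 else 0)) := fun x => by omega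
    rw [Finset.sum_congr rfl fun x _ => step x,
      show (∑ x : Fin n, ((Multiset.count (x, 0) M + Multiset.count (x, 1) M + Multiset.count (x, 2) M) +
          ((if ((x, 0) : EdgeVar n) = (i', j') then 1 else 0) +
           (if ((x, 1) : EdgeVar n) = (i', j') then 1 else 0) +
           (if ((x, 2) : EdgeVar n) = (i', j') then 1 else 0))))
        = (∑ x : Fin n, (Multiset.count (x, 0) M + Multiset.count (x, 1) M + Multiset.count (x, 2) M)) +
          ∑ x : Fin n, ((if ((x, 0) : EdgeVar n) = (i', j') then 1 else 0) +
           (if ((x, 1) : EdgeVar n) = (i', j') then 1 else 0) +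
           (if ((x, 2) : EdgeVar n) = (i', j') then 1 else 0)) from Finset.sum_add_distrib]
    have one : ∑ x : Fin n, ((if ((x, 0) : EdgeVar n) = (i', j') then 1 else 0) +
           (if ((x, 1) : EdgeVar n) = (i', j') then 1 else 0) +
           (if ((x, 2) : EdgeVar n) = (i', j') then 1 else 0)) = 1 := by
      fin_cases j' <;>
        simp [Prod.ext_iff, Finset.sum_add_distrib, Finset.sum_ite_eq']
    omega

lemma fill {ι : Type*} [DecidableEq ι] (s : Finset ι) (d : ι → ℕ) :
    ∀ t : ℕ, t ≤ ∑ i ∈ s, d i → ∃ r : ι → ℕ, (∀ i, r i ≤ d i) ∧ ∑ i ∈ s, r i = t := by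
  induction s using Finset.cons_induction with
  | empty =>
    intro t ht
    simp only [Finset.sum_empty, Nat.le_zero] at ht
    exact ⟨fun _ => 0, fun _ => Nat.zero_le _, by simp [ht]⟩
  | cons a s ha ih =>
    intro t ht
    rw [Finset.sum_cons] at ht
    obtain ⟨r, hr, hsum⟩ := ih (t - min t (d a)) (by omega)
    refine ⟨Function.update r a (min t (d a)), fun i => ?_, ?_⟩
    · by_cases h : i = a
      · subst h; simp
      · rw [Function.update_of_ne h]; exact hr i
    · rw [Finset.sum_cons, Function.update_self]
      have : ∑ i ∈ s, Function.update r a (min t (d a)) i = ∑ i ∈ s, r i :=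
        Finset.sum_congr rfl fun i hi =>
          Function.update_of_ne (fun h => ha (by rw [← h]; exact hi)) _ _
      rw [this, hsum]
      omega

def buildM {n : ℕ} (p q r : Fin n → ℕ) : Multiset (EdgeVar n) :=
  ∑ i : Fin n, (Multiset.replicate (p i) ((i, 0) : EdgeVar n)
    + Multiset.replicate (q i) ((i, 1) : EdgeVar n)
    + Multiset.replicate (r i) ((i, 2) : EdgeVar n))

lemma buildM_count0 {n : ℕ} (p q r : Fin n → ℕ) (i : Fin n) :
    (buildM p q r).count (i, 0) = p i := by
  simp [buildM, Multiset.count_sum', Multiset.count_replicate, Prod.ext_iff,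
    Finset.sum_ite_eq']

lemma buildM_count1 {n : ℕ} (p q r : Fin n → ℕ) (i : Fin n) :
    (buildM p q r).count (i, 1) = q i := by
  simp [buildM, Multiset.count_sum', Multiset.count_replicate, Prod.ext_iff,
    Finset.sum_ite_eq']

lemma buildM_count2 {n : ℕ} (p q r : Fin n → ℕ) (i : Fin n) :
    (buildM p q r).count (i, 2) = r i := by
  simp [buildM, Multiset.count_sum', Multiset.count_replicate, Prod.ext_iff,
    Finset.sum_ite_eq']

lemma funext_vertex {n : ℕ} {f g : VertexVar n → ℕ}
    (h0 : f none = g none)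
    (h1 : ∀ i, f (some (i, 0)) = g (some (i, 0)))
    (h2 : ∀ i, f (some (i, 1)) = g (some (i, 1))) : f = g := by
  funext v
  rcases v with _ | ⟨i, j⟩
  · exact h0
  · fin_cases j
    · exact h1 i
    · exact h2 i

lemma main_iff (n m : ℕ) (b : VertexVar n → ℕ) :
    (∃ M : Multiset (EdgeVar n), Multiset.card M = m ∧ b = (M.map rho).sum) ↔
      ((∑ i : Fin n, max (b (some (i, 0))) (b (some (i, 1))) ≤ m) ∧
       (m ≤ ∑ i : Fin n, (b (some (i, 0)) + b (some (i, 1)))) ∧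
       b none = 2 * m - ∑ i : Fin n, (b (some (i, 0)) + b (some (i, 1)))) := by
  constructor
  · rintro ⟨M, hM, rfl⟩
    set P : Fin n → ℕ := fun i => M.count (i, 0) with hP
    set Q : Fin n → ℕ := fun i => M.count (i, 1) with hQ
    set R : Fin n → ℕ := fun i => M.count (i, 2) with hR
    have h1 : ∀ i, (M.map rho).sum (some (i, 0)) = P i + R i := fun i => eval1 M i
    have h2 : ∀ i, (M.map rho).sum (some (i, 1)) = Q i + R i := fun i => eval2 M i
    have h0 : (M.map rho).sum none = ∑ i, (P i + Q i) := eval0 M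
    have hc : m = ∑ i, (P i + Q i + R i) := by rw [← hM]; exact evalcard M
    have key1 : ∑ i : Fin n, max ((M.map rho).sum (some (i, 0))) ((M.map rho).sum (some (i, 1)))
        = ∑ i, max (P i + R i) (Q i + R i) :=
      Finset.sum_congr rfl fun i _ => by rw [h1, h2]
    have key2 : ∑ i : Fin n, ((M.map rho).sum (some (i, 0)) + (M.map rho).sum (some (i, 1)))
        = ∑ i, ((P i + R i) + (Q i + R i)) :=
      Finset.sum_congr rfl fun i _ => by rw [h1, h2]
    have sum1 : ∑ i, max (P i + R i) (Q i + R i) ≤ ∑ i, (P i + Q i + R i) :=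
      Finset.sum_le_sum fun i _ => max_le (by omega) (by omega)
    have sum2 : ∑ i, (P i + Q i + R i) ≤ ∑ i, ((P i + R i) + (Q i + R i)) :=
      Finset.sum_le_sum fun i _ => by omega
    have sum3 : ∑ i, (P i + Q i) + ∑ i, ((P i + R i) + (Q i + R i))
        = 2 * ∑ i, (P i + Q i + R i) := by
      rw [← Finset.sum_add_distrib, Finset.mul_sum]
      exact Finset.sum_congr rfl fun i _ => by omega
    refine ⟨by rw [key1]; omega, by rw [key2]; omega, by rw [key2, h0]; omega⟩
  · rintro ⟨h1, h2, h3⟩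
    have hminmax : ∑ i : Fin n, (b (some (i, 0)) + b (some (i, 1)))
        = ∑ i : Fin n, max (b (some (i, 0))) (b (some (i, 1)))
          + ∑ i : Fin n, min (b (some (i, 0))) (b (some (i, 1))) := by
      rw [← Finset.sum_add_distrib]
      exact Finset.sum_congr rfl fun i _ => by omega
    obtain ⟨r, hr, hrsum⟩ := fill Finset.univ
      (fun i => min (b (some (i, 0))) (b (some (i, 1))))
      ((∑ i : Fin n, (b (some (i, 0)) + b (some (i, 1)))) - m) (by
        show (∑ i : Fin n, (b (some (i, 0)) + b (some (i, 1)))) - m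
          ≤ ∑ i : Fin n, min (b (some (i, 0))) (b (some (i, 1)))
        omega)
    have hri : ∀ i, r i ≤ min (b (some (i, 0))) (b (some (i, 1))) := hr
    set M := buildM (fun i => b (some (i, 0)) - r i) (fun i => b (some (i, 1)) - r i) r with hM
    have c0 : ∀ i, M.count (i, 0) = b (some (i, 0)) - r i := fun i => buildM_count0 _ _ _ i
    have c1 : ∀ i, M.count (i, 1) = b (some (i, 1)) - r i := fun i => buildM_count1 _ _ _ i
    have c2 : ∀ i, M.count (i, 2) = r i := fun i => buildM_count2 _ _ _ i
    refine ⟨M, ?_, ?_⟩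
    · rw [evalcard]
      have step : ∀ i : Fin n, (M.count (i, 0) + M.count (i, 1) + M.count (i, 2))
          = (b (some (i, 0)) + b (some (i, 1))) - r i := by
        intro i
        rw [c0, c1, c2]
        have := hri i
        omega
      rw [Finset.sum_congr rfl fun i _ => step i]
      have expand : ∑ i : Fin n, ((b (some (i, 0)) + b (some (i, 1))) - r i) + ∑ i : Fin n, r i
          = ∑ i : Fin n, (b (some (i, 0)) + b (some (i, 1))) := by
        rw [← Finset.sum_add_distrib]
        refine Finset.sum_congr rfl fun i _ => ?_
        have := hri i
        omega
      omega
    · refine funext_vertex ?_ ?_ ?_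
      · rw [eval0]
        have step : ∀ i : Fin n, (M.count (i, 0) + M.count (i, 1))
            = (b (some (i, 0)) + b (some (i, 1))) - 2 * r i := by
          intro i
          rw [c0, c1]
          have := hri i
          omega
        rw [Finset.sum_congr rfl fun i _ => step i]
        have expand : ∑ i : Fin n, ((b (some (i, 0)) + b (some (i, 1))) - 2 * r i)
            + 2 * ∑ i : Fin n, r i
            = ∑ i : Fin n, (b (some (i, 0)) + b (some (i, 1))) := by
          rw [Finset.mul_sum, ← Finset.sum_add_distrib]
          refine Finset.sum_congr rfl fun i _ => ?_
          have := hri i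
          omega
        omega
      · intro i
        rw [eval1, c0, c2]
        have := hri i
        omega
      · intro i
        rw [eval2, c1, c2]
        have := hri i
        omega

section Assembly

variable (n m : ℕ)

abbrev Tset := {f : Fin n → ℕ × ℕ //
  (∑ i, max (f i).1 (f i).2 ≤ m) ∧ m ≤ ∑ i, ((f i).1 + (f i).2)}

abbrev Bset := {f : Fin n → ℕ × ℕ // ∑ i, ((f i).1 + (f i).2) + 1 ≤ m}

abbrev Aset := {f : Fin n → ℕ × ℕ // ∑ i, max (f i).1 (f i).2 ≤ m}

def splitSum : Aset n m ≃ (Tset n m) ⊕ (Bset n m) where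
  toFun f := if h : m ≤ ∑ i, ((f.1 i).1 + (f.1 i).2)
    then Sum.inl ⟨f.1, f.2, h⟩
    else Sum.inr ⟨f.1, by omega⟩
  invFun x := x.elim (fun f => ⟨f.1, f.2.1⟩)
    (fun f => ⟨f.1, by
      have hle : ∑ i, max ((f.1 i).1) ((f.1 i).2) ≤ ∑ i, ((f.1 i).1 + (f.1 i).2) :=
        Finset.sum_le_sum fun i _ => by omega
      have := f.2
      omega⟩)
  left_inv f := by
    by_cases h : m ≤ ∑ i, ((f.1 i).1 + (f.1 i).2) <;> simp [h]
  right_inv x := by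
    rcases x with f | f
    · simp [f.2.2]
    · have := f.2
      have h : ¬ m ≤ ∑ i, ((f.1 i).1 + (f.1 i).2) := by omega
      simp [h]

/-- reconstruct a vertex vector from the pair data -/
def gfun (f : Fin n → ℕ × ℕ) : VertexVar n → ℕ := fun v =>
  match v with
  | none => 2 * m - ∑ i, ((f i).1 + (f i).2)
  | some (i, j) => if j = 0 then (f i).1 else (f i).2

lemma gfun_comp_sum (f : Fin n → ℕ × ℕ) :
    ∑ i : Fin n, (gfun n m f (some (i, 0)) + gfun n m f (some (i, 1)))
      = ∑ i, ((f i).1 + (f i).2) := rfl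

lemma gfun_max_sum (f : Fin n → ℕ × ℕ) :
    ∑ i : Fin n, max (gfun n m f (some (i, 0))) (gfun n m f (some (i, 1)))
      = ∑ i, max (f i).1 (f i).2 := rfl

def bEquiv : {b : VertexVar n → ℕ |
      (∑ i : Fin n, max (b (some (i, 0))) (b (some (i, 1))) ≤ m) ∧
      (m ≤ ∑ i : Fin n, (b (some (i, 0)) + b (some (i, 1)))) ∧
      b none = 2 * m - ∑ i : Fin n, (b (some (i, 0)) + b (some (i, 1)))} ≃ Tset n m where
  toFun b := ⟨fun i => (b.1 (some (i, 0)), b.1 (some (i, 1))), b.2.1, b.2.2.1⟩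
  invFun f := ⟨gfun n m f.1, by
    refine ⟨?_, ?_, ?_⟩
    · rw [gfun_max_sum]; exact f.2.1
    · rw [gfun_comp_sum]; exact f.2.2
    · rw [gfun_comp_sum]; rfl⟩
  left_inv b := by
    apply Subtype.ext
    refine funext_vertex ?_ (fun i => rfl) (fun i => rfl)
    show 2 * m - ∑ i : Fin n, (b.1 (some (i, 0)) + b.1 (some (i, 1))) = b.1 none
    exact b.2.2.2.symm
  right_inv f := by
    apply Subtype.ext
    funext i
    rfl

end Assembly

/-- The number of vectors `b ∈ ℕ^{V(𝒢ₙ)}` expressible as the sum of a multiset of `m`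
edge vectors `ρ(e)` (the dimension of the degree-`m` component of the edge ring `k[𝒢ₙ]`)
equals `Σ_{i=0}^{n} C(n,i)·C(2n+m−i, 2n) − C(2n+m−1, 2n)`. -/
theorem stmt_9 (n m : ℕ) (hn : 2 ≤ n) (hm : 1 ≤ m) :
    Set.ncard {b : VertexVar n → ℕ |
        ∃ M : Multiset (EdgeVar n), Multiset.card M = m ∧ b = (M.map rho).sum} =
      (∑ i ∈ Finset.range (n + 1), n.choose i * (2 * n + m - i).choose (2 * n)) -
        (2 * n + m - 1).choose (2 * n) := by
  classical
  have hQ : {b : VertexVar n → ℕ |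
        ∃ M : Multiset (EdgeVar n), Multiset.card M = m ∧ b = (M.map rho).sum}
      = {b : VertexVar n → ℕ |
      (∑ i : Fin n, max (b (some (i, 0))) (b (some (i, 1))) ≤ m) ∧
      (m ≤ ∑ i : Fin n, (b (some (i, 0)) + b (some (i, 1)))) ∧
      b none = 2 * m - ∑ i : Fin n, (b (some (i, 0)) + b (some (i, 1)))} := by
    ext b
    exact main_iff n m b
  rw [hQ, ← Nat.card_coe_set_eq]
  rw [Nat.card_congr (bEquiv n m)]
  haveI hAfin : Finite (Aset n m) :=
    finite_of_imp (finite_pairs n (2 * m)) (fun f hf => by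
      have : ∑ i, ((f i).1 + (f i).2) ≤ ∑ i, 2 * max (f i).1 (f i).2 :=
        Finset.sum_le_sum fun i _ => by omega
      rw [← Finset.mul_sum] at this
      omega)
  haveI hTfin : Finite (Tset n m) := finite_of_imp hAfin (fun f hf => hf.1)
  haveI hBfin : Finite (Bset n m) :=
    finite_of_imp (finite_pairs n m) (fun f hf => by omega)
  have hsplit : Nat.card (Aset n m) = Nat.card (Tset n m) + Nat.card (Bset n m) := by
    rw [Nat.card_congr (splitSum n m), Nat.card_sum]
  have hA : Nat.card (Aset n m)
      = ∑ i ∈ Finset.range (n + 1), n.choose i * (2 * n + m - i).choose (2 * n) :=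
    card_A n m (by omega)
  have hB : Nat.card (Bset n m) = (2 * n + m - 1).choose (2 * n) := by
    have e : Bset n m ≃ {f : Fin n → ℕ × ℕ // ∑ i, ((f i).1 + (f i).2) ≤ m - 1} :=
      Equiv.subtypeEquiv (Equiv.refl _) (fun f => by simp; omega)
    rw [Nat.card_congr e, card_pairs_sum_le]
    congr 1
    omega
  omega
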